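/- Let λ ∈ ℂ with λ ∉ {0, −1/2, −1, −3/2, …}. Then for each fixed x ∈ ℂ there is ε > 0 such that for all complex t with |t| < ε: Σ_{n=0}^∞ [(λ−1/2)_n/(2λ)_n]·C_n^λ(x)·t^n = ((1+R−xt)/2)^{1/2−λ}. -/

import Mathlib

open scoped BigOperators

noncomputable def poch (a : ℂ) (n : ℕ) : ℂ := (ascPochhammer ℂ n).eval a

noncomputable def geg (l : ℂ) (n : ℕ) (x : ℂ) : ℂ :=
  ∑ k ∈ Finset.range (n / 2 + 1),
    (-1 : ℂ) ^ k * poch l (n - k) * (2 * x) ^ (n - 2 * k) /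
      ((Nat.factorial k : ℂ) * (Nat.factorial (n - 2 * k) : ℂ))

noncomputable def hyp2F1 (a b c z : ℂ) : ℂ :=
  ∑' k : ℕ, poch a k * poch b k / (poch c k * (Nat.factorial k : ℂ)) * z ^ k

noncomputable def Rc (x t : ℂ) : ℂ := (1 - 2 * x * t + t ^ 2) ^ ((1 : ℂ) / 2)

noncomputable def Uc (u x t : ℂ) : ℂ :=
  (1 - 2 * (1 - u) * x * t + (1 - u) ^ 2 * t ^ 2) ^ ((1 : ℂ) / 2)

noncomputable def legP (ν μ z : ℂ) : ℂ :=
  2 ^ μ / Complex.Gamma (1 - μ) * (z ^ 2 - 1) ^ (-μ / 2) *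
    hyp2F1 (-ν - μ) (1 + ν - μ) (1 - μ) ((1 - z) / 2)

noncomputable def hypT2F1 (n : ℕ) (b c u : ℂ) : ℂ :=
  ∑ k ∈ Finset.range (n + 1),
    poch (-(n : ℂ)) k * poch b k * u ^ k / (poch c k * (Nat.factorial k : ℂ))

noncomputable def hypT3F2 (n : ℕ) (a b c d u : ℂ) : ℂ :=
  ∑ k ∈ Finset.range (n + 1),
    poch (-(n : ℂ)) k * poch a k * poch b k * u ^ k /
      (poch c k * poch d k * (Nat.factorial k : ℂ))

noncomputable def pochR (a : ℝ) (n : ℕ) : ℝ := (ascPochhammer ℝ n).eval a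

noncomputable def gegR (l : ℝ) (n : ℕ) (x : ℝ) : ℝ :=
  ∑ k ∈ Finset.range (n / 2 + 1),
    (-1 : ℝ) ^ k * pochR l (n - k) * (2 * x) ^ (n - 2 * k) /
      ((Nat.factorial k : ℝ) * (Nat.factorial (n - 2 * k) : ℝ))

noncomputable def gegPoly (l : ℂ) (n : ℕ) : Polynomial ℂ :=
  ∑ k ∈ Finset.range (n / 2 + 1),
    Polynomial.C ((-1 : ℂ) ^ k * poch l (n - k) * 2 ^ (n - 2 * k) /
      ((Nat.factorial k : ℂ) * (Nat.factorial (n - 2 * k) : ℂ))) *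
      Polynomial.X ^ (n - 2 * k)

/-! The right-hand side `g(t) = u ^ (1/2 - λ)`, `u = (1 + R - x t) / 2`, satisfies
`t g' = (1/2 - λ) (1 - R⁻¹) g`. Differentiating once more and eliminating `R` by
`R² = 1 - 2 x t + t²` gives a second-order equation which, in terms of the Euler operator
`θ = t d/dt`, reads
`θ(θ + 2λ - 1) g - 2 x t (θ + λ)(θ + λ - 1/2) g + t² (θ + λ - 1/2)(θ + λ + 1/2) g = 0`.
Hence the Taylor coefficients `c n` of `g` at `0` obey
`(n+2)(n+1+2λ) c (n+2) = 2x (n+1+λ)(n+λ+1/2) c (n+1) - (n+λ-1/2)(n+λ+1/2) c n`,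
and by the three-term recurrence of the Gegenbauer polynomials so do the coefficients
`(λ-1/2)_n / (2λ)_n C_n^λ(x)`. Since `2λ ∉ -ℕ`, this recurrence determines a sequence
from its first term, and `g` is holomorphic near `0`, so it is the sum of its Taylor series. -/

open Complex Filter Topology
open scoped Nat

section TaylorCoeff

variable {𝕜 : Type*} [NontriviallyNormedField 𝕜] {f g : 𝕜 → 𝕜} {n : ℕ}

noncomputable def taylorCoeff (f : 𝕜 → 𝕜) (n : ℕ) : 𝕜 := iteratedDeriv n f 0 / n !

noncomputable def eulerOp (f : 𝕜 → 𝕜) : 𝕜 → 𝕜 := fun z ↦ z * deriv f z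

noncomputable def eulerQuadOp (a b c : 𝕜) (f : 𝕜 → 𝕜) : 𝕜 → 𝕜 :=
  fun z ↦ a * eulerOp (eulerOp f) z + b * eulerOp f z + c * f z

theorem taylorCoeff_zero_right (f : 𝕜 → 𝕜) : taylorCoeff f 0 = f 0 := by
  simp [taylorCoeff]

theorem taylorCoeff_add (hf : ContDiffAt 𝕜 n f 0) (hg : ContDiffAt 𝕜 n g 0) :
    taylorCoeff (fun z ↦ f z + g z) n = taylorCoeff f n + taylorCoeff g n := by
  simp only [taylorCoeff, iteratedDeriv_fun_add hf hg, add_div]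

theorem taylorCoeff_const_mul (c : 𝕜) (f : 𝕜 → 𝕜) (n : ℕ) :
    taylorCoeff (fun z ↦ c * f z) n = c * taylorCoeff f n := by
  simp only [taylorCoeff, iteratedDeriv_const_mul_field, mul_div_assoc]

theorem taylorCoeff_eq_zero_of_eventually_eq_zero (h : ∀ᶠ z in 𝓝 0, f z = 0) (n : ℕ) :
    taylorCoeff f n = 0 := by
  simp [taylorCoeff, EventuallyEq.iteratedDeriv_eq n (g := fun _ ↦ 0) h]

@[fun_prop]
theorem AnalyticAt.eulerOp [CompleteSpace 𝕜] {z : 𝕜} (hf : AnalyticAt 𝕜 f z) :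
    AnalyticAt 𝕜 (eulerOp f) z :=
  analyticAt_id.mul hf.deriv

@[fun_prop]
theorem AnalyticAt.eulerQuadOp [CompleteSpace 𝕜] {z : 𝕜} (a b c : 𝕜)
    (hf : AnalyticAt 𝕜 f z) : AnalyticAt 𝕜 (eulerQuadOp a b c f) z := by
  unfold _root_.eulerQuadOp
  fun_prop

variable [CharZero 𝕜]

theorem taylorCoeff_deriv (f : 𝕜 → 𝕜) (n : ℕ) :
    taylorCoeff (deriv f) n = (n + 1) * taylorCoeff f (n + 1) := by
  have : (n + 1 : 𝕜) ≠ 0 := by exact_mod_cast n.succ_ne_zero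
  simp only [taylorCoeff, iteratedDeriv_succ', Nat.factorial_succ, Nat.cast_mul]
  field_simp
  push_cast
  ring

theorem taylorCoeff_id_mul_succ (hf : ContDiffAt 𝕜 (n + 1) f 0) :
    taylorCoeff (fun z ↦ z * f z) (n + 1) = taylorCoeff f n := by
  have hid : ContDiffAt 𝕜 (n + 1) (fun z : 𝕜 ↦ z) 0 := contDiffAt_id
  have h := iteratedDeriv_fun_mul hid hf
  rw [Finset.sum_eq_single 1 (fun i _ hi ↦ by simp [iteratedDeriv_fun_id_zero, hi])
    (by simp)] at h
  have : (n + 1 : 𝕜) ≠ 0 := by exact_mod_cast n.succ_ne_zero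
  simp only [taylorCoeff, h, iteratedDeriv_fun_id_zero, Nat.factorial_succ, Nat.cast_mul]
  field_simp
  simp

theorem taylorCoeff_eulerOp (hf : ContDiffAt 𝕜 n (deriv f) 0) :
    taylorCoeff (eulerOp f) n = n * taylorCoeff f n := by
  cases n with
  | zero => simp [taylorCoeff_zero_right, eulerOp]
  | succ n =>
    unfold eulerOp
    rw [taylorCoeff_id_mul_succ (by exact_mod_cast hf), taylorCoeff_deriv]
    push_cast
    ring

variable [CompleteSpace 𝕜] {A B C : 𝕜 → 𝕜}

theorem taylorCoeff_eulerQuadOp (hf : AnalyticAt 𝕜 f 0) (a b c : 𝕜) (n : ℕ) :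
    taylorCoeff (eulerQuadOp a b c f) n = (a * n ^ 2 + b * n + c) * taylorCoeff f n := by
  unfold eulerQuadOp
  rw [taylorCoeff_add, taylorCoeff_add, taylorCoeff_const_mul, taylorCoeff_const_mul,
    taylorCoeff_const_mul, taylorCoeff_eulerOp, taylorCoeff_eulerOp]
  · ring
  all_goals exact AnalyticAt.contDiffAt (by fun_prop)

theorem taylorCoeff_add_two_of_eventually_eq_zero (hA : AnalyticAt 𝕜 A 0)
    (hB : AnalyticAt 𝕜 B 0) (hC : AnalyticAt 𝕜 C 0)
    (h : ∀ᶠ z in 𝓝 0, A z + z * B z + z ^ 2 * C z = 0) (n : ℕ) :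
    taylorCoeff A (n + 2) + taylorCoeff B (n + 1) + taylorCoeff C n = 0 := by
  have h' : ∀ᶠ z in 𝓝 0, A z + z * B z + z * (z * C z) = 0 := by
    filter_upwards [h] with z hz
    linear_combination hz
  have h0 := taylorCoeff_eq_zero_of_eventually_eq_zero h' (n + 2)
  rw [taylorCoeff_add, taylorCoeff_add, taylorCoeff_id_mul_succ, taylorCoeff_id_mul_succ,
    taylorCoeff_id_mul_succ] at h0
  · exact h0
  all_goals exact AnalyticAt.contDiffAt (by fun_prop)

theorem taylorCoeff_one_of_eventually_eq_zero (hA : AnalyticAt 𝕜 A 0)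
    (hB : AnalyticAt 𝕜 B 0) (hC : AnalyticAt 𝕜 C 0)
    (h : ∀ᶠ z in 𝓝 0, A z + z * B z + z ^ 2 * C z = 0) :
    taylorCoeff A 1 + taylorCoeff B 0 = 0 := by
  have h' : ∀ᶠ z in 𝓝 0, A z + z * B z + z * (z * C z) = 0 := by
    filter_upwards [h] with z hz
    linear_combination hz
  have h0 := taylorCoeff_eq_zero_of_eventually_eq_zero h' 1
  rw [taylorCoeff_add, taylorCoeff_add, taylorCoeff_id_mul_succ, taylorCoeff_id_mul_succ,
    taylorCoeff_zero_right (fun z ↦ z * C z), zero_mul, add_zero] at h0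
  · exact h0
  all_goals exact AnalyticAt.contDiffAt (by fun_prop)

end TaylorCoeff

theorem hasSum_taylorCoeff_mul_pow {f : ℂ → ℂ} {r : ℝ}
    (hf : DifferentiableOn ℂ f (Metric.ball 0 r)) {z : ℂ} (hz : z ∈ Metric.ball 0 r) :
    HasSum (fun n ↦ taylorCoeff f n * z ^ n) (f z) := by
  refine (Complex.hasSum_taylorSeries_on_ball hf hz).congr_fun fun n ↦ ?_
  simp only [taylorCoeff, smul_eq_mul, sub_zero]
  ring

section Gegenbauer

variable (l x : ℂ) (m : ℕ)

theorem geg_zero : geg l 0 x = 1 := by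
  simp [geg, poch]

theorem geg_one : geg l 1 x = 2 * l * x := by
  simp [geg, poch]
  ring

/-- For `2k ≤ m + 2`, the `k`-th summands of `C_{m+2}` and `2x C_{m+1}` and the `(k-1)`-st
summand of `C_m` are multiples of this. -/
noncomputable def gegCore (k : ℕ) : ℂ :=
  (-1) ^ k * poch l (m + 1 - k) * (2 * x) ^ (m + 2 - 2 * k) / (k ! * (m + 2 - 2 * k)! : ℂ)

theorem geg_add_two_eq_sum :
    geg l (m + 2) x
      = ∑ k ∈ Finset.range (m / 2 + 2), (l + (m + 1 - k : ℕ)) * gegCore l x m k := by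
  rw [geg, show (m + 2) / 2 + 1 = m / 2 + 2 by omega]
  refine Finset.sum_congr rfl fun k hk ↦ ?_
  have hk : k ≤ m + 1 := by simp at hk; omega
  rw [gegCore, show m + 2 - k = m + 1 - k + 1 by omega, poch, ascPochhammer_succ_eval, ← poch]
  ring

theorem two_mul_geg_add_one_eq_sum :
    2 * x * geg l (m + 1) x
      = ∑ k ∈ Finset.range (m / 2 + 2), ((m : ℂ) + 2 - 2 * k) * gegCore l x m k := by
  rw [geg, Finset.mul_sum]
  refine Finset.sum_subset_zero_on_sdiff (Finset.range_subset_range.2 (by omega)) ?_ ?_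
  · intro k hk
    simp only [Finset.mem_sdiff, Finset.mem_range] at hk
    have : (2 * k : ℂ) = m + 2 := by exact_mod_cast (show 2 * k = m + 2 by omega)
    simp [this]
  · intro k hk
    have hk : 2 * k ≤ m + 1 := by simp at hk; omega
    have hf : ((m + 1 - 2 * k + 1 : ℕ) : ℂ) = m + 2 - 2 * k := by
      rw [Nat.cast_add, Nat.cast_sub hk]; push_cast; ring
    have : (m : ℂ) + 2 - 2 * k ≠ 0 := by
      rw [← hf]; exact_mod_cast (m + 1 - 2 * k).succ_ne_zero
    rw [gegCore, show m + 2 - 2 * k = m + 1 - 2 * k + 1 by omega, Nat.factorial_succ, pow_succ,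
      Nat.cast_mul, hf]
    field_simp

theorem geg_eq_neg_sum :
    geg l m x = -∑ k ∈ Finset.range (m / 2 + 2), (k : ℂ) * gegCore l x m k := by
  rw [Finset.sum_range_succ', geg]
  simp only [Nat.cast_zero, zero_mul, add_zero, ← Finset.sum_neg_distrib]
  refine Finset.sum_congr rfl fun k _ ↦ ?_
  rw [gegCore, show m + 1 - (k + 1) = m - k by omega,
    show m + 2 - 2 * (k + 1) = m - 2 * k by omega, Nat.factorial_succ]
  push_cast
  field_simp
  ring

theorem geg_add_two :
    (m + 2 : ℂ) * geg l (m + 2) x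
      = 2 * x * (m + 1 + l) * geg l (m + 1) x - (m + 2 * l) * geg l m x := by
  rw [geg_add_two_eq_sum, mul_comm (2 * x), mul_assoc, two_mul_geg_add_one_eq_sum,
    geg_eq_neg_sum l x m, mul_neg, sub_neg_eq_add, Finset.mul_sum, Finset.mul_sum,
    Finset.mul_sum, ← Finset.sum_add_distrib]
  refine Finset.sum_congr rfl fun k hk ↦ ?_
  have hk : k ≤ m + 1 := by simp at hk; omega
  rw [Nat.cast_sub hk]
  push_cast
  ring

end Gegenbauer

theorem poch_div_poch_succ (a b : ℂ) (n : ℕ) :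
    poch a (n + 1) / poch b (n + 1) = poch a n / poch b n * ((a + n) / (b + n)) := by
  simp only [poch, ascPochhammer_succ_eval]
  exact mul_div_mul_comm _ _ _ _

def AltGFRecurrence (lam x : ℂ) (c : ℕ → ℂ) : Prop :=
  2 * lam * c 1 = 2 * x * lam * (lam - 1 / 2) * c 0 ∧
    ∀ n : ℕ, (n + 2) * (n + 1 + 2 * lam) * c (n + 2)
      = 2 * x * (n + 1 + lam) * (n + lam + 1 / 2) * c (n + 1)
        - (n + lam - 1 / 2) * (n + lam + 1 / 2) * c n

theorem AltGFRecurrence.eq {lam x : ℂ} (hlam : ∀ n : ℕ, lam ≠ -(n : ℂ) / 2)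
    {c d : ℕ → ℂ} (hc : AltGFRecurrence lam x c) (hd : AltGFRecurrence lam x d)
    (h0 : c 0 = d 0) : c = d := by
  have hne (n : ℕ) : (n : ℂ) + 2 * lam ≠ 0 := fun h ↦ hlam n (by linear_combination h / 2)
  have hp (n : ℕ) : ((n : ℂ) + 2) * (n + 1 + 2 * lam) ≠ 0 :=
    mul_ne_zero (by norm_cast) (by simpa using hne (n + 1))
  have h1 : c 1 = d 1 :=
    mul_left_cancel₀ (a := 2 * lam) (by simpa using hne 0) (by rw [hc.1, hd.1, h0])
  suffices ∀ n, c n = d n ∧ c (n + 1) = d (n + 1) from funext fun n ↦ (this n).1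
  intro n
  induction n with
  | zero => exact ⟨h0, h1⟩
  | succ n ih =>
    exact ⟨ih.2, mul_left_cancel₀ (hp n) ((hc.2 n).trans (by rw [ih.1, ih.2, hd.2 n]))⟩

theorem altGFRecurrence_gegCoeff {lam : ℂ} (hlam : ∀ n : ℕ, lam ≠ -(n : ℂ) / 2)
    (x : ℂ) :
    AltGFRecurrence lam x fun n ↦ poch (lam - 1 / 2) n / poch (2 * lam) n * geg lam n x := by
  have hne (n : ℕ) : 2 * lam + n ≠ 0 := fun h ↦ hlam n (by linear_combination h / 2)
  constructor
  · have := hne 0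
    simp only [geg_zero, geg_one, poch, ascPochhammer_one, ascPochhammer_zero,
      Polynomial.eval_X, Polynomial.eval_one]
    push_cast at this
    field_simp
  · intro n
    have h1 := hne (n + 1)
    have h0 := hne n
    have hrec := geg_add_two lam x n
    dsimp only
    rw [poch_div_poch_succ _ _ (n + 1), poch_div_poch_succ _ _ n]
    push_cast at h1 hrec ⊢
    generalize poch (lam - 1 / 2) n / poch (2 * lam) n = r
    field_simp
    linear_combination r * (n + 1 + 2 * lam) * (2 * lam - 1 + 2 * n) * (2 * lam + 1 + 2 * n) * hrec

section AltGF

noncomputable def altGF (lam x t : ℂ) : ℂ := ((1 + Rc x t - x * t) / 2) ^ (1 / 2 - lam)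

def altGFDomain (x : ℂ) : Set ℂ :=
  {t | 1 - 2 * x * t + t ^ 2 ∈ slitPlane ∧ (1 + Rc x t - x * t) / 2 ∈ slitPlane}

theorem Rc_sq (x t : ℂ) : Rc x t ^ 2 = 1 - 2 * x * t + t ^ 2 := by
  rw [Rc, one_div, Complex.cpow_ofNat_inv_pow]

variable {lam x t : ℂ}

theorem Rc_ne_zero (hP : 1 - 2 * x * t + t ^ 2 ∈ slitPlane) : Rc x t ≠ 0 :=
  fun h ↦ slitPlane_ne_zero hP (by rw [← Rc_sq, h]; ring)

theorem hasDerivAt_Rc (hP : 1 - 2 * x * t + t ^ 2 ∈ slitPlane) :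
    HasDerivAt (Rc x) ((t - x) / Rc x t) t := by
  have hR := Rc_ne_zero hP
  have hP' : HasDerivAt (fun s ↦ 1 - 2 * x * s + s ^ 2) (2 * t - 2 * x) t := by
    refine ((((hasDerivAt_id' t).const_mul (2 * x)).const_sub 1).fun_add
      (hasDerivAt_pow 2 t)).congr_deriv ?_
    push_cast
    ring
  refine (hP'.cpow_const (c := 1 / 2) hP).congr_deriv ?_
  rw [cpow_sub _ _ (slitPlane_ne_zero hP), cpow_one, ← Rc, ← Rc_sq]
  field_simp

theorem hasDerivAt_altGF (ht : t ∈ altGFDomain x) :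
    HasDerivAt (altGF lam x) ((1 / 2 - lam) * altGF lam x t *
      (((t - x) / Rc x t - x) / (1 + Rc x t - x * t))) t := by
  have hu : HasDerivAt (fun s ↦ (1 + Rc x s - x * s) / 2) (((t - x) / Rc x t - x) / 2) t :=
    ((((hasDerivAt_Rc ht.1).const_add 1).fun_sub ((hasDerivAt_id' t).const_mul x)).div_const
      2).congr_deriv (by ring)
  refine (hu.cpow_const ht.2).congr_deriv ?_
  rw [cpow_sub _ _ (slitPlane_ne_zero ht.2), cpow_one, altGF]
  field_simp

theorem eulerOp_altGF (ht : t ∈ altGFDomain x) :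
    eulerOp (altGF lam x) t = (1 / 2 - lam) * (1 - (Rc x t)⁻¹) * altGF lam x t := by
  have hu : 1 + Rc x t - t * x ≠ 0 := fun h ↦
    slitPlane_ne_zero ht.2 (by rw [mul_comm, h, zero_div])
  have hR := Rc_ne_zero ht.1
  rw [eulerOp, (hasDerivAt_altGF ht).deriv]
  field_simp
  linear_combination -(1 - 2 * lam) * altGF lam x t * Rc_sq x t

theorem eulerOp_eulerOp_altGF (ht : altGFDomain x ∈ 𝓝 t) :
    eulerOp (eulerOp (altGF lam x)) t = (1 / 2 - lam) * t * (t - x) * (Rc x t)⁻¹ ^ 3 *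
      altGF lam x t + (1 / 2 - lam) * (1 - (Rc x t)⁻¹) * eulerOp (altGF lam x) t := by
  have ht' : t ∈ altGFDomain x := mem_of_mem_nhds ht
  have hR := Rc_ne_zero ht'.1
  have heq : eulerOp (altGF lam x) =ᶠ[𝓝 t]
      fun s ↦ (1 / 2 - lam) * (1 - (Rc x s)⁻¹) * altGF lam x s := by
    filter_upwards [ht] with s hs using eulerOp_altGF hs
  have hd := (((hasDerivAt_Rc ht'.1).fun_inv hR).const_sub 1 |>.const_mul (1 / 2 - lam)).fun_mul
    (hasDerivAt_altGF (lam := lam) ht').differentiableAt.hasDerivAt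
  rw [eulerOp, heq.deriv_eq, hd.deriv, eulerOp]
  field_simp

theorem altGF_ode (ht : altGFDomain x ∈ 𝓝 t) :
    eulerQuadOp 1 (2 * lam - 1) 0 (altGF lam x) t
      + t * eulerQuadOp (-2 * x) (-2 * x * (2 * lam - 1 / 2)) (-2 * x * lam * (lam - 1 / 2))
        (altGF lam x) t
      + t ^ 2 * eulerQuadOp 1 (2 * lam) (lam ^ 2 - 1 / 4) (altGF lam x) t = 0 := by
  have ht' : t ∈ altGFDomain x := mem_of_mem_nhds ht
  have h1 := eulerOp_altGF (lam := lam) ht'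
  have h2 := eulerOp_eulerOp_altGF (lam := lam) ht
  have hs : Rc x t * (Rc x t)⁻¹ = 1 := mul_inv_cancel₀ (Rc_ne_zero ht'.1)
  set s := (Rc x t)⁻¹
  set g := altGF lam x t
  set μ : ℂ := 1 / 2 - lam
  set P := 1 - 2 * x * t + t ^ 2
  simp only [eulerQuadOp]
  -- substitute `θ²g` and `θg`; what remains is a multiple of `P s² - 1`
  linear_combination P * h2
    + (P * μ * (1 - s) + (2 * lam - 1) - 2 * x * (2 * lam - 1 / 2) * t + 2 * lam * t ^ 2) * h1
    + g * (μ * t * (t - x) * s + μ ^ 2) * (-s ^ 2 * Rc_sq x t + (Rc x t * s + 1) * hs)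

theorem altGFDomain_mem_nhds_zero (x : ℂ) : altGFDomain x ∈ 𝓝 0 := by
  have hP0 : 1 - 2 * x * 0 + 0 ^ 2 ∈ slitPlane := by simp
  have hR : ContinuousAt (Rc x) 0 := (hasDerivAt_Rc hP0).continuousAt
  have hR0 : Rc x 0 = 1 := by simp [Rc]
  have hPc : ContinuousAt (fun t : ℂ ↦ 1 - 2 * x * t + t ^ 2) 0 := by fun_prop
  have huc : ContinuousAt (fun t ↦ (1 + Rc x t - x * t) / 2) 0 := by fun_prop
  exact (hPc.eventually_mem (isOpen_slitPlane.mem_nhds hP0)).and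
    (huc.eventually_mem (isOpen_slitPlane.mem_nhds (by simp [hR0])))

theorem altGFRecurrence_taylorCoeff (lam x : ℂ) :
    AltGFRecurrence lam x (taylorCoeff (altGF lam x)) := by
  have hdom := altGFDomain_mem_nhds_zero x
  have hg : AnalyticAt ℂ (altGF lam x) 0 :=
    Complex.analyticAt_iff_eventually_differentiableAt.2
      (Filter.mem_of_superset hdom fun t ht ↦ (hasDerivAt_altGF ht).differentiableAt)
  have hode := (eventually_eventually_nhds.2 hdom).mono fun t ht ↦ altGF_ode (lam := lam) ht
  have h1 := taylorCoeff_one_of_eventually_eq_zero (by fun_prop) (by fun_prop) (by fun_prop) hode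
  have h2 := taylorCoeff_add_two_of_eventually_eq_zero (by fun_prop) (by fun_prop) (by fun_prop)
    hode
  simp only [taylorCoeff_eulerQuadOp hg] at h1 h2
  refine ⟨by linear_combination h1, fun n ↦ ?_⟩
  have := h2 n
  push_cast at this
  linear_combination this

end AltGF

/-- the companion alternative generating function (quasi-cyclic case, ν = 0). -/
theorem gegenbauer_alternative_gf' (lam : ℂ)
    (hlam : ∀ n : ℕ, lam ≠ -(n : ℂ) / 2) (x : ℂ) :
    ∃ ε > 0, ∀ t : ℂ, ‖t‖ < ε →
      (∑' n : ℕ, poch (lam - 1 / 2) n / poch (2 * lam) n * geg lam n x * t ^ n)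
        = ((1 + Rc x t - x * t) / 2) ^ (1 / 2 - lam) := by
  obtain ⟨ε, hε, hball⟩ := Metric.mem_nhds_iff.1 (altGFDomain_mem_nhds_zero x)
  have hdiff : DifferentiableOn ℂ (altGF lam x) (Metric.ball 0 ε) := fun t ht ↦
    (hasDerivAt_altGF (hball ht)).differentiableAt.differentiableWithinAt
  have hcoeff : taylorCoeff (altGF lam x)
      = fun n ↦ poch (lam - 1 / 2) n / poch (2 * lam) n * geg lam n x :=
    (altGFRecurrence_taylorCoeff lam x).eq hlam (altGFRecurrence_gegCoeff hlam x)
      (by simp [taylorCoeff_zero_right, altGF, Rc, geg_zero, poch])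
  refine ⟨ε, hε, fun t ht ↦ ?_⟩
  have hsum := hasSum_taylorCoeff_mul_pow hdiff (mem_ball_zero_iff.2 ht)
  rw [hcoeff] at hsum
  exact hsum.tsum_eq
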